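/- arXiv:2507.11681 — 2 statements merged into one kernel-verified Lean document; each statement's English description precedes it below -/
import Mathlib

section
/- If a 2-Visits instance has a feasible schedule, then it has a feasible schedule in which all secondary visits are placed in gaps and secondary visits appear in order of non-decreasing induced deadline, where the induced deadline of task i is d_i plus the position of its primary visit. -/
/-- Auxiliary recursion for the discretized sequence, counting down from the top index. -/
def discAux (d : ℕ → ℕ) (n : ℕ) : ℕ → ℕ
  | 0 => d (n - 1)
  | k + 1 => min (discAux d n k - 1) (d (n - 1 - (k + 1)))

/-- The discretized sequence of `d` (of length `n`): `a (n-1) = d (n-1)` and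
`a i = min (a (i+1) - 1) (d i)` for `i < n - 1`. -/
def disc (d : ℕ → ℕ) (n : ℕ) (i : ℕ) : ℕ := discAux d n (n - 1 - i)
/-- A feasible 2-Visits schedule: each task `i < n` has a primary position `p i`
and a secondary position `s i`, all `2n` positions in `[1, 2n]` and pairwise distinct,
with `p i ≤ d i` and `s i < p i ∨ s i ≤ p i + d i`. -/
def Feasible2V (n : ℕ) (d p s : ℕ → ℕ) : Prop :=
  (∀ i < n, 1 ≤ p i ∧ p i ≤ 2 * n ∧ 1 ≤ s i ∧ s i ≤ 2 * n) ∧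
  (∀ i < n, ∀ j < n, i ≠ j → p i ≠ p j) ∧
  (∀ i < n, ∀ j < n, i ≠ j → s i ≠ s j) ∧
  (∀ i < n, ∀ j < n, p i ≠ s j) ∧
  (∀ i < n, p i ≤ d i) ∧
  (∀ i < n, s i < p i ∨ s i ≤ p i + d i)

section
variable (d : ℕ → ℕ) (n : ℕ)

lemma disc_last (hn : 0 < n) : disc d n (n-1) = d (n-1) := by
  unfold disc
  have : n - 1 - (n - 1) = 0 := by omega
  rw [this]; rfl

lemma disc_succ (i : ℕ) (h : i + 1 < n) : disc d n i = min (disc d n (i+1) - 1) (d i) := by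
  unfold disc
  have h1 : n - 1 - i = (n - 1 - (i+1)) + 1 := by omega
  rw [h1, discAux]
  have h2 : n - 1 - (n - 1 - (i + 1) + 1) = i := by omega
  rw [h2]

lemma disc_le_d (i : ℕ) (hi : i < n) (hn : 0 < n) : disc d n i ≤ d i := by
  rcases eq_or_lt_of_le (Nat.lt_iff_add_one_le.mp hi) with h | h
  · have : i = n - 1 := by omega
    rw [this, disc_last d n hn]
  · rw [disc_succ d n i h]; exact min_le_right _ _
end

section
variable {d : ℕ → ℕ} {n : ℕ}

lemma disc_lt_succ (hapos : ∀ i < n, 0 < disc d n i) (i : ℕ) (h : i + 1 < n) :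
    disc d n i < disc d n (i+1) := by
  have h1 := disc_succ d n i h
  have h2 := hapos (i+1) h
  have h3 : disc d n i ≤ disc d n (i+1) - 1 := h1 ▸ min_le_left _ _
  omega

lemma disc_lt_of_lt (hapos : ∀ i < n, 0 < disc d n i) {i j : ℕ} (hij : i < j) (hj : j < n) :
    disc d n i < disc d n j := by
  induction j with
  | zero => omega
  | succ m ih =>
    rcases Nat.lt_succ_iff_lt_or_eq.mp hij with h | h
    · exact lt_trans (ih h (by omega)) (disc_lt_succ hapos m hj)
    · subst h; exact disc_lt_succ hapos i hj

/-- Count lemma: in a schedule with injective primaries `p k ≤ d k`, at least `i+1`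
primaries are `≤ disc d n i`. -/
lemma count_primaries (hmono : ∀ i j, i ≤ j → j < n → d i ≤ d j)
    (hapos : ∀ i < n, 0 < disc d n i)
    {p : ℕ → ℕ} (hpd : ∀ k < n, p k ≤ d k)
    (hpinj : ∀ i < n, ∀ j < n, i ≠ j → p i ≠ p j)
    (i : ℕ) (hi : i < n) :
    i + 1 ≤ ((Finset.range n).filter (fun k => p k ≤ disc d n i)).card := by
  have key : ∀ m < n, n - m ≤ ((Finset.range n).filter (fun k => p k ≤ discAux d n m)).card := by
    intro m
    induction m with
    | zero =>
      intro hm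
      have : (Finset.range n).filter (fun k => p k ≤ discAux d n 0) = Finset.range n := by
        apply Finset.filter_true_of_mem
        intro k hk
        have hk' := Finset.mem_range.mp hk
        exact le_trans (hpd k hk') (hmono k (n-1) (by omega) (by omega))
      rw [this, Finset.card_range]; omega
    | succ m ih =>
      intro hm
      have ihm := ih (by omega)
      have hA : discAux d n (m+1) = min (discAux d n m - 1) (d (n - 1 - (m + 1))) := rfl
      rcases min_cases (discAux d n m - 1) (d (n - 1 - (m + 1))) with ⟨hmin, _⟩ | ⟨hmin, _⟩
      · -- case: value = discAux d n m - 1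
        rw [hA, hmin]
        -- card (≤ A) ≤ card (≤ A-1) + 1
        set A := discAux d n m with hAdef
        have hsub : (Finset.range n).filter (fun k => p k ≤ A) ⊆
            ((Finset.range n).filter (fun k => p k ≤ A - 1)) ∪
            ((Finset.range n).filter (fun k => p k = A)) := by
          intro k hk
          simp only [Finset.mem_filter, Finset.mem_union, Finset.mem_range] at hk ⊢
          omega
        have hone : ((Finset.range n).filter (fun k => p k = A)).card ≤ 1 := by
          apply Finset.card_le_one.mpr
          intro x hx y hy
          simp only [Finset.mem_filter, Finset.mem_range] at hx hy
          by_contra hne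
          exact hpinj x hx.1 y hy.1 hne (hx.2.trans hy.2.symm)
        have hc1 := Finset.card_le_card hsub
        have hc2 := Finset.card_union_le ((Finset.range n).filter (fun k => p k ≤ A - 1))
          ((Finset.range n).filter (fun k => p k = A))
        omega
      · -- case: value = d (n - 1 - (m+1))
        rw [hA, hmin]
        have hsub : Finset.range (n - 1 - (m+1) + 1) ⊆
            (Finset.range n).filter (fun k => p k ≤ d (n - 1 - (m + 1))) := by
          intro k hk
          have hk' := Finset.mem_range.mp hk
          simp only [Finset.mem_filter, Finset.mem_range]
          exact ⟨by omega, le_trans (hpd k (by omega)) (hmono k (n-1-(m+1)) (by omega) (by omega))⟩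
        have := Finset.card_le_card hsub
        rw [Finset.card_range] at this
        omega
  have h1 := key (n - 1 - i) (by omega)
  have h2 : disc d n i = discAux d n (n - 1 - i) := rfl
  rw [h2]
  omega
end




section
variable {d : ℕ → ℕ} {n : ℕ}

/-- every position in `[1, 2n]` is occupied -/
lemma cover {p s : ℕ → ℕ} (hf : Feasible2V n d p s) {x : ℕ} (hx1 : 1 ≤ x) (hx2 : x ≤ 2 * n) :
    (∃ k < n, p k = x) ∨ (∃ j < n, s j = x) := by
  obtain ⟨hb, hpinj, hsinj, hps, _, _⟩ := hf
  set P := (Finset.range n).image p with hP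
  set S := (Finset.range n).image s with hS
  have hcardP : P.card = n := by
    rw [hP, Finset.card_image_of_injOn, Finset.card_range]
    intro a ha b hb hab
    by_contra hne
    exact hpinj a (Finset.mem_range.mp ha) b (Finset.mem_range.mp hb) hne hab
  have hcardS : S.card = n := by
    rw [hS, Finset.card_image_of_injOn, Finset.card_range]
    intro a ha b hb' hab
    by_contra hne
    exact hsinj a (Finset.mem_range.mp ha) b (Finset.mem_range.mp hb') hne hab
  have hdisj : Disjoint P S := by
    rw [Finset.disjoint_left]
    intro a haP haS
    obtain ⟨k, hk, hpk⟩ := Finset.mem_image.mp haP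
    obtain ⟨j, hj, hsj⟩ := Finset.mem_image.mp haS
    exact hps k (Finset.mem_range.mp hk) j (Finset.mem_range.mp hj) (hpk.trans hsj.symm)
  have hsub : P ∪ S ⊆ Finset.Icc 1 (2*n) := by
    intro a ha
    rcases Finset.mem_union.mp ha with h | h
    · obtain ⟨k, hk, hpk⟩ := Finset.mem_image.mp h
      have := hb k (Finset.mem_range.mp hk)
      rw [Finset.mem_Icc]; omega
    · obtain ⟨j, hj, hsj⟩ := Finset.mem_image.mp h
      have := hb j (Finset.mem_range.mp hj)
      rw [Finset.mem_Icc]; omega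
  have hcard : (P ∪ S).card = (Finset.Icc 1 (2*n)).card := by
    rw [Finset.card_union_of_disjoint hdisj, hcardP, hcardS, Nat.card_Icc]
    omega
  have heq : P ∪ S = Finset.Icc 1 (2*n) :=
    Finset.eq_of_subset_of_card_le hsub (le_of_eq hcard.symm)
  have hxmem : x ∈ P ∪ S := heq ▸ Finset.mem_Icc.mpr ⟨hx1, hx2⟩
  rcases Finset.mem_union.mp hxmem with h | h
  · obtain ⟨k, hk, hpk⟩ := Finset.mem_image.mp h
    exact Or.inl ⟨k, Finset.mem_range.mp hk, hpk⟩
  · obtain ⟨j, hj, hsj⟩ := Finset.mem_image.mp h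
    exact Or.inr ⟨j, Finset.mem_range.mp hj, hsj⟩
end

section
variable {d : ℕ → ℕ} {n : ℕ}

lemma step_lemma (hmono : ∀ i j, i ≤ j → j < n → d i ≤ d j)
    (hapos : ∀ i < n, 0 < disc d n i) (hle : ∀ i < n, d i ≤ 2 * n)
    {p s : ℕ → ℕ} (hf : Feasible2V n d p s)
    {i : ℕ} (hi : i < n) (hnp : ∀ k < n, p k ≠ disc d n i) :
    ∃ p' s' : ℕ → ℕ, Feasible2V n d p' s' ∧
      (∑ k ∈ Finset.range n, p k) < (∑ k ∈ Finset.range n, p' k) := by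
  obtain ⟨hb, hpinj, hsinj, hps, hpd, hsec⟩ := hf
  set ai := disc d n i with hai
  have hai1 : 1 ≤ ai := hapos i hi
  have haid : ai ≤ d i := disc_le_d d n i hi (by omega)
  have hai2 : ai ≤ 2 * n := le_trans haid (hle i hi)
  -- the position ai is a secondary
  have hcov := cover ⟨hb, hpinj, hsinj, hps, hpd, hsec⟩ hai1 hai2
  rcases hcov with ⟨k, hk, hpk⟩ | ⟨j, hj, hsj⟩
  · exact absurd hpk (hnp k hk)
  -- find k with p k < ai and ai ≤ d k
  have hcount := count_primaries hmono hapos hpd hpinj i hi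
  have hfilter : (Finset.range n).filter (fun k => p k ≤ ai) =
      (Finset.range n).filter (fun k => p k < ai) := by
    apply Finset.filter_congr
    intro x hx
    have := hnp x (Finset.mem_range.mp hx)
    constructor <;> omega
  have hex : ∃ k < n, p k < ai ∧ ai ≤ d k := by
    by_contra hcon
    push_neg at hcon
    have hsub : (Finset.range n).filter (fun k => p k < ai) ⊆ Finset.range i := by
      intro x hx
      simp only [Finset.mem_filter, Finset.mem_range] at hx ⊢
      have hdx := hcon x hx.1 hx.2
      by_contra hge
      have : d i ≤ d x := hmono i x (by omega) hx.1
      omega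
    have := Finset.card_le_card hsub
    rw [Finset.card_range] at this
    rw [hfilter] at hcount
    omega
  obtain ⟨k, hk, hpk, hdk⟩ := hex
  refine ⟨Function.update p k ai, Function.update s j (p k), ⟨?_, ?_, ?_, ?_, ?_, ?_⟩, ?_⟩
  · -- bounds
    intro x hx
    simp only [Function.update_apply]
    have h1 := hb x hx
    have h2 := hb k hk
    split_ifs <;> omega
  · -- p' injective
    intro x hx y hy hxy
    simp only [Function.update_apply]
    split_ifs with h1 h2 h2
    · subst h1; subst h2; exact absurd rfl hxy
    · exact Ne.symm (hnp y hy)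
    · exact hnp x hx
    · exact hpinj x hx y hy hxy
  · -- s' injective
    intro x hx y hy hxy
    simp only [Function.update_apply]
    split_ifs with h1 h2 h2
    · subst h1; subst h2; exact absurd rfl hxy
    · exact hps k hk y hy
    · exact Ne.symm (hps k hk x hx)
    · exact hsinj x hx y hy hxy
  · -- p' ≠ s'
    intro x hx y hy
    simp only [Function.update_apply]
    split_ifs with h1 h2 h2
    · omega
    · have hyj : y ≠ j := h2
      have := hsinj y hy j hj hyj
      rw [hsj] at this
      exact Ne.symm this
    · exact hpinj x hx k hk h1
    · exact hps x hx y hy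
  · -- p' ≤ d
    intro x hx
    simp only [Function.update_apply]
    split_ifs with h1
    · subst h1; exact hdk
    · exact hpd x hx
  · -- secondary constraint
    intro x hx
    simp only [Function.update_apply]
    split_ifs with h1 h2 h2
    · left; exact hpk
    · have h3 := hsec j hj
      have h4 : p x = p j := by rw [h1]
      have h5 : d x = d j := by rw [h1]
      omega
    · have h3 := hsec k hk
      have h4 : s x = s k := by rw [h2]
      have h5 : d x = d k := by rw [h2]
      omega
    · exact hsec x hx
  · -- sum increases
    have h1 := Finset.sum_update_of_mem (Finset.mem_range.mpr hk) p ai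
    have h2 := Finset.add_sum_erase (Finset.range n) p (Finset.mem_range.mpr hk)
    rw [Finset.erase_eq] at h2
    omega
end

section
variable {d : ℕ → ℕ} {n : ℕ}

lemma exchange (hmono : ∀ i j, i ≤ j → j < n → d i ≤ d j)
    (hapos : ∀ i < n, 0 < disc d n i) (hle : ∀ i < n, d i ≤ 2 * n) :
    ∀ (M : ℕ) (p s : ℕ → ℕ), Feasible2V n d p s →
      2 * n * n ≤ M + (∑ k ∈ Finset.range n, p k) →
      ∃ p' s', Feasible2V n d p' s' ∧ ∀ i < n, ∃ k < n, p' k = disc d n i := by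
  intro M
  induction M with
  | zero =>
    intro p s hf hM
    by_cases hall : ∀ i < n, ∃ k < n, p k = disc d n i
    · exact ⟨p, s, hf, hall⟩
    · exfalso
      push_neg at hall
      obtain ⟨i, hi, hnp⟩ := hall
      obtain ⟨p', s', hf', hsum⟩ := step_lemma hmono hapos hle hf hi hnp
      have hbound : (∑ k ∈ Finset.range n, p' k) ≤ 2 * n * n := by
        calc (∑ k ∈ Finset.range n, p' k) ≤ ∑ _k ∈ Finset.range n, 2 * n :=
              Finset.sum_le_sum (fun k hk => (hf'.1 k (Finset.mem_range.mp hk)).2.1)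
          _ = n * (2 * n) := by rw [Finset.sum_const, Finset.card_range, smul_eq_mul]
          _ = 2 * n * n := by ring
      omega
  | succ M ih =>
    intro p s hf hM
    by_cases hall : ∀ i < n, ∃ k < n, p k = disc d n i
    · exact ⟨p, s, hf, hall⟩
    · push_neg at hall
      obtain ⟨i, hi, hnp⟩ := hall
      obtain ⟨p', s', hf', hsum⟩ := step_lemma hmono hapos hle hf hi hnp
      exact ih p' s' hf' (by omega)
end

section
variable {d : ℕ → ℕ} {n : ℕ}

lemma resort (hapos : ∀ i < n, 0 < disc d n i)
    {p s : ℕ → ℕ} (hf : Feasible2V n d p s)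
    (hall : ∀ i < n, ∃ k < n, p k = disc d n i) :
    ∃ p' s' : ℕ → ℕ, Feasible2V n d p' s' ∧
      (∀ i < n, ∃ j < n, p' i = disc d n j) ∧
      (∀ i < n, ∀ j < n, s' i < s' j → d i + p' i ≤ d j + p' j) := by
  obtain ⟨hb, hpinj, hsinj, hps, hpd, hsec⟩ := hf
  -- pigeonhole : every primary is a disc value
  have hdiscinj : ∀ i < n, ∀ j < n, disc d n i = disc d n j → i = j := by
    intro i hi j hj he
    by_contra hne
    rcases Nat.lt_or_ge i j with h | h
    · have := disc_lt_of_lt hapos h hj; omega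
    · have hji : j < i := by omega
      have := disc_lt_of_lt hapos hji hi; omega
  choose F hF1 hF2 using hall
  set G : Fin n → Fin n := fun i => ⟨F i i.2, hF1 i i.2⟩ with hGdef
  have hGinj : Function.Injective G := by
    intro a b hab
    have h1 : F a a.2 = F b b.2 := congrArg Fin.val hab
    have h2 : p (F a a.2) = p (F b b.2) := by rw [h1]
    rw [hF2 a a.2, hF2 b b.2] at h2
    exact Fin.ext (hdiscinj a a.2 b b.2 h2)
  have hGsurj : Function.Surjective G := Finite.injective_iff_surjective.mp hGinj
  have hprim : ∀ k < n, ∃ j < n, p k = disc d n j := by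
    intro k hk
    obtain ⟨i, hGi⟩ := hGsurj ⟨k, hk⟩
    have h1 : F i i.2 = k := congrArg Fin.val hGi
    refine ⟨i, i.2, ?_⟩
    rw [← h1, hF2 i i.2]
  -- gaps
  set P := (Finset.range n).image p with hPdef
  have hPsub : P ⊆ Finset.Icc 1 (2*n) := by
    intro a ha
    obtain ⟨k, hk, hpk⟩ := Finset.mem_image.mp ha
    have := hb k (Finset.mem_range.mp hk)
    rw [Finset.mem_Icc]; omega
  have hPcard : P.card = n := by
    rw [hPdef, Finset.card_image_of_injOn, Finset.card_range]
    intro a ha b hb' hab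
    by_contra hne
    exact hpinj a (Finset.mem_range.mp ha) b (Finset.mem_range.mp hb') hne hab
  set Gp := (Finset.Icc 1 (2*n)) \ P with hGpdef
  have hGcard : Gp.card = n := by
    rw [hGpdef, Finset.card_sdiff_of_subset hPsub, Nat.card_Icc, hPcard]
    omega
  have hsG : ∀ j < n, s j ∈ Gp := by
    intro j hj
    rw [hGpdef, Finset.mem_sdiff]
    constructor
    · have := hb j hj; rw [Finset.mem_Icc]; omega
    · intro hmem
      obtain ⟨k, hk, hpk⟩ := Finset.mem_image.mp hmem
      exact hps k (Finset.mem_range.mp hk) j hj hpk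
  set g := Gp.orderIsoOfFin hGcard with hgdef
  set e : Fin n → ℕ := fun k => d k + p k with hedef
  set τ := Tuple.sort e with hτdef
  have hτmono : Monotone (e ∘ τ) := Tuple.monotone_sort e
  have hse : ∀ k < n, s k ≤ d k + p k := by
    intro k hk
    have h1 := hsec k hk
    have h2 := hpd k hk
    omega
  have hkey : ∀ r : Fin n, ((g r : ℕ)) ≤ e (τ r) := by
    intro r
    by_contra hgt
    push_neg at hgt
    set X := e (τ r) with hXdef
    have hTsub : (Finset.Iic r).image (fun r' => s ((τ r' : Fin n) : ℕ)) ⊆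
        Gp.filter (fun y => y ≤ X) := by
      intro y hy
      obtain ⟨r', hr', hyr⟩ := Finset.mem_image.mp hy
      rw [Finset.mem_filter]
      constructor
      · rw [← hyr]; exact hsG _ (τ r').2
      · rw [← hyr]
        calc s ((τ r' : Fin n) : ℕ) ≤ e (τ r') := hse _ (τ r').2
          _ ≤ X := hτmono (Finset.mem_Iic.mp hr')
    have hTcard : ((Finset.Iic r).image (fun r' => s ((τ r' : Fin n) : ℕ))).card = (r : ℕ) + 1 := by
      rw [Finset.card_image_of_injOn, Fin.card_Iic]
      intro a _ b _ hab
      by_contra hne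
      have hτne : τ a ≠ τ b := fun h => hne (τ.injective h)
      have hvne : ((τ a : Fin n) : ℕ) ≠ ((τ b : Fin n) : ℕ) := fun h => hτne (Fin.ext h)
      exact hsinj _ (τ a).2 _ (τ b).2 hvne hab
    have hsub2 : Gp.filter (fun y => y ≤ X) ⊆ (Finset.Iio r).image (fun r' => ((g r' : ℕ))) := by
      intro y hy
      rw [Finset.mem_filter] at hy
      obtain ⟨hyG, hyX⟩ := hy
      set ry := g.symm ⟨y, hyG⟩ with hrydef
      have hgy : (g ry : ℕ) = y := by rw [hrydef, OrderIso.apply_symm_apply]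
      have hlt : ry < r := by
        by_contra hge
        push_neg at hge
        have : g r ≤ g ry := g.monotone hge
        have : (g r : ℕ) ≤ (g ry : ℕ) := this
        omega
      exact Finset.mem_image.mpr ⟨ry, Finset.mem_Iio.mpr hlt, hgy⟩
    have c1 := Finset.card_le_card hTsub
    have c2 := Finset.card_le_card hsub2
    have c3 := Finset.card_image_le (s := Finset.Iio r) (f := fun r' => ((g r' : ℕ)))
    rw [Fin.card_Iio] at c3
    omega
  -- the new secondary assignment
  refine ⟨p, fun x => if h : x < n then ((g (τ.symm ⟨x, h⟩) : ℕ)) else 0,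
    ⟨?_, hpinj, ?_, ?_, hpd, ?_⟩, hprim, ?_⟩
  · -- bounds
    intro x hx
    simp only [dif_pos hx]
    have h1 := hb x hx
    have h2 : ((g (τ.symm ⟨x, hx⟩) : ℕ)) ∈ Gp := (g (τ.symm ⟨x, hx⟩)).2
    simp only [hGpdef, Finset.mem_sdiff, Finset.mem_Icc] at h2
    omega
  · -- injectivity of s'
    intro x hx y hy hxy
    simp only [dif_pos hx, dif_pos hy]
    intro he
    have h1 : g (τ.symm ⟨x, hx⟩) = g (τ.symm ⟨y, hy⟩) := Subtype.ext he
    have h2 := τ.symm.injective (g.injective h1)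
    exact hxy (congrArg Fin.val h2)
  · -- p ≠ s'
    intro x hx y hy
    simp only [dif_pos hy]
    intro he
    have h2 : ((g (τ.symm ⟨y, hy⟩) : ℕ)) ∈ Gp := (g (τ.symm ⟨y, hy⟩)).2
    simp only [hGpdef, Finset.mem_sdiff] at h2
    exact h2.2 (he ▸ Finset.mem_image.mpr ⟨x, Finset.mem_range.mpr hx, rfl⟩)
  · -- secondary constraint
    intro x hx
    simp only [dif_pos hx]
    right
    have h1 := hkey (τ.symm ⟨x, hx⟩)
    rw [Equiv.apply_symm_apply] at h1
    have h2 : e ⟨x, hx⟩ = d x + p x := rfl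
    omega
  · -- ordering
    intro x hx y hy
    simp only [dif_pos hx, dif_pos hy]
    intro hlt
    have h1 : g (τ.symm ⟨x, hx⟩) < g (τ.symm ⟨y, hy⟩) := Subtype.mk_lt_mk.mpr hlt
    have h2 : τ.symm ⟨x, hx⟩ ≤ τ.symm ⟨y, hy⟩ := le_of_lt (g.lt_iff_lt.mp h1)
    have h3 := hτmono h2
    simp only [Function.comp_apply, Equiv.apply_symm_apply] at h3
    exact h3
end

theorem stmt_6 (n : ℕ) (d : ℕ → ℕ)
    (hmono : ∀ i j, i ≤ j → j < n → d i ≤ d j)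
    (hapos : ∀ i < n, 0 < disc d n i)
    (hle : ∀ i < n, d i ≤ 2 * n)
    (h : ∃ p s : ℕ → ℕ, Feasible2V n d p s) :
    ∃ p s : ℕ → ℕ, Feasible2V n d p s ∧
      (∀ i < n, ∃ j < n, p i = disc d n j) ∧
      (∀ i < n, ∀ j < n, s i < s j → d i + p i ≤ d j + p j) := by
  obtain ⟨p, s, hf⟩ := h
  obtain ⟨p1, s1, hf1, hall⟩ :=
    exchange hmono hapos hle (2*n*n) p s hf (by omega)
  exact resort hapos hf1 hall
end

section
/- In a Position Matching instance (D, A, T), if some target t ∈ T satisfies t ≤ min(D) + min(A), then the instance has a solution if and only if the instance obtained by removing min(D), min(A), and t has a solution (where min(D) is matched with min(A) and t). -/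
/-- A solution of a Position Matching instance `(d, a, t)` of size `n`:
a pair of perfect matchings (permutations) such that each deadline `d i` is matched
with a position `a (π i) ≤ d i` and a target `t (τ i)` with `d i + a (π i) ≥ t (τ i)`. -/
def PMSolution (n : ℕ) (d a t : ℕ → ℕ) : Prop :=
  ∃ π τ : Equiv.Perm (Fin n), ∀ i : Fin n,
    a ((π i : ℕ)) ≤ d (i : ℕ) ∧ t ((τ i : ℕ)) ≤ d (i : ℕ) + a ((π i : ℕ))

lemma disc_step (d : ℕ → ℕ) (n i : ℕ) (h : i + 1 < n) :
    disc d n i = min (disc d n (i + 1) - 1) (d i) := by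
  unfold disc
  have h1 : n - 1 - i = (n - 1 - (i + 1)) + 1 := by omega
  rw [h1]
  show min (discAux d n (n - 1 - (i + 1)) - 1) (d (n - 1 - ((n - 1 - (i + 1)) + 1))) = _
  congr 2
  omega

lemma disc_zero_le (d : ℕ → ℕ) (n : ℕ) : ∀ i, i < n → disc d n 0 ≤ disc d n i := by
  intro i
  induction i with
  | zero => intro _; exact le_refl _
  | succ j ih =>
    intro h
    refine le_trans (ih (by omega)) ?_
    rw [disc_step d n j h]
    exact le_trans (min_le_left _ _) (Nat.sub_le _ _)

lemma disc_zero_le_d (d : ℕ → ℕ) (n : ℕ) (hn : 0 < n) : disc d n 0 ≤ d 0 := by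
  by_cases h : 1 < n
  · rw [disc_step d n 0 h]; exact min_le_right _ _
  · have : n = 1 := by omega
    subst this
    simp [disc, discAux]


def extPerm (m : ℕ) (p : Fin (m + 1)) (e : Equiv.Perm (Fin m)) : Equiv.Perm (Fin (m + 1)) :=
  (finSuccEquiv' 0).trans ((Equiv.optionCongr e).trans (finSuccEquiv' p).symm)

lemma extPerm_zero (m : ℕ) (p : Fin (m + 1)) (e : Equiv.Perm (Fin m)) :
    extPerm m p e 0 = p := by
  simp [extPerm, finSuccEquiv'_at, finSuccEquiv'_symm_none]

lemma extPerm_succ (m : ℕ) (p : Fin (m + 1)) (e : Equiv.Perm (Fin m)) (i : Fin m) :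
    extPerm m p e i.succ = p.succAbove (e i) := by
  have h0 : (finSuccEquiv' (0 : Fin (m + 1))) i.succ = some i := by
    rw [show i.succ = Fin.succAbove 0 i from (congrFun Fin.succAbove_zero i).symm]
    exact finSuccEquiv'_succAbove 0 i
  simp [extPerm, h0, finSuccEquiv'_symm_some]

def resPerm (m : ℕ) (p : Fin (m + 1)) (σ : Equiv.Perm (Fin (m + 1))) : Equiv.Perm (Fin m) :=
  Equiv.removeNone ((finSuccEquiv' (0 : Fin (m + 1))).symm.trans (σ.trans (finSuccEquiv' p)))

lemma resPerm_spec (m : ℕ) (p : Fin (m + 1)) (σ : Equiv.Perm (Fin (m + 1)))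
    (h : σ 0 = p) (i : Fin m) : σ i.succ = p.succAbove (resPerm m p σ i) := by
  set e := (finSuccEquiv' (0 : Fin (m + 1))).symm.trans (σ.trans (finSuccEquiv' p)) with he
  have hne : σ i.succ ≠ p := by
    rw [← h]
    intro hc
    have := σ.injective hc
    exact (Fin.succ_ne_zero i) this
  have hsome : ∃ x', e (some i) = some x' := by
    have : e (some i) = finSuccEquiv' p (σ i.succ) := by
      simp [he, Equiv.trans_apply, finSuccEquiv'_symm_some, Fin.succAbove_zero]
    rw [this]
    rcases hx : finSuccEquiv' p (σ i.succ) with _ | x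
    · exfalso
      apply hne
      have := congrArg (finSuccEquiv' p).symm hx
      rwa [Equiv.symm_apply_apply, finSuccEquiv'_symm_none] at this
    · exact ⟨x, rfl⟩
  have hmain := Equiv.removeNone_some e hsome
  have heq : e (some i) = finSuccEquiv' p (σ i.succ) := by
    simp [he, Equiv.trans_apply, finSuccEquiv'_symm_some, Fin.succAbove_zero]
  rw [heq] at hmain
  have := congrArg (finSuccEquiv' p).symm hmain
  rw [Equiv.symm_apply_apply, finSuccEquiv'_symm_some] at this
  exact this.symm

lemma coe_succAbove (m : ℕ) (p : Fin (m + 1)) (j : Fin m) :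
    ((p.succAbove j : Fin (m + 1)) : ℕ) = if (j : ℕ) < (p : ℕ) then (j : ℕ) else (j : ℕ) + 1 := by
  rw [Fin.succAbove]
  split_ifs with h1 h2 h2
  · rfl
  · exact absurd (by simpa [Fin.lt_def] using h1) h2
  · exact absurd (by simpa [Fin.lt_def] using h2) h1
  · rfl


lemma exchange_s12 (m : ℕ) (d a t : ℕ → ℕ) (k : Fin (m + 1))
    (ha0d : a 0 ≤ d 0)
    (hd0 : ∀ i : Fin (m + 1), d 0 ≤ d (i : ℕ))
    (ha0 : ∀ i : Fin (m + 1), a 0 ≤ a (i : ℕ))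
    (hsmall : t (k : ℕ) ≤ d 0 + a 0)
    (π τ : Equiv.Perm (Fin (m + 1)))
    (hsol : ∀ i : Fin (m + 1),
      a ((π i : ℕ)) ≤ d (i : ℕ) ∧ t ((τ i : ℕ)) ≤ d (i : ℕ) + a ((π i : ℕ))) :
    ∃ π' τ' : Equiv.Perm (Fin (m + 1)), π' 0 = 0 ∧ τ' 0 = k ∧
      ∀ i : Fin (m + 1),
        a ((π' i : ℕ)) ≤ d (i : ℕ) ∧ t ((τ' i : ℕ)) ≤ d (i : ℕ) + a ((π' i : ℕ)) := by
  have hv0 : ((0 : Fin (m + 1)) : ℕ) = 0 := rfl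
  -- Step 1: arrange τ 0 = k
  have step1 : ∃ π₁ τ₁ : Equiv.Perm (Fin (m + 1)), τ₁ 0 = k ∧
      ∀ i : Fin (m + 1),
        a ((π₁ i : ℕ)) ≤ d (i : ℕ) ∧ t ((τ₁ i : ℕ)) ≤ d (i : ℕ) + a ((π₁ i : ℕ)) := by
    set j := τ.symm k with hj
    have hτj : τ j = k := τ.apply_symm_apply k
    rcases le_total (a ((π 0 : ℕ))) (a ((π j : ℕ))) with h1 | h1
    · refine ⟨π, τ * Equiv.swap 0 j, ?_, ?_⟩
      · simp [Equiv.Perm.mul_apply, Equiv.swap_apply_left, hτj]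
      · intro i
        by_cases hi0 : i = 0
        · subst hi0
          refine ⟨(hsol 0).1, ?_⟩
          simp only [Equiv.Perm.mul_apply, Equiv.swap_apply_left, hτj, hv0]
          exact le_trans hsmall (by exact Nat.add_le_add_left (ha0 (π 0)) _)
        · by_cases hij : i = j
          · subst hij
            refine ⟨(hsol j).1, ?_⟩
            simp only [Equiv.Perm.mul_apply, Equiv.swap_apply_right]
            have h2 := (hsol 0).2
            rw [hv0] at h2
            exact le_trans h2 (Nat.add_le_add (hd0 j) h1)
          · have hs : Equiv.swap (0 : Fin (m + 1)) j i = i :=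
              Equiv.swap_apply_of_ne_of_ne hi0 hij
            simp only [Equiv.Perm.mul_apply, hs]
            exact hsol i
    · refine ⟨π * Equiv.swap 0 j, τ * Equiv.swap 0 j, ?_, ?_⟩
      · simp [Equiv.Perm.mul_apply, Equiv.swap_apply_left, hτj]
      · intro i
        by_cases hi0 : i = 0
        · subst hi0
          simp only [Equiv.Perm.mul_apply, Equiv.swap_apply_left, hτj, hv0]
          constructor
          · exact le_trans h1 ((hsol 0).1.trans_eq (by rw [hv0]))
          · exact le_trans hsmall (Nat.add_le_add_left (ha0 (π j)) _)
        · by_cases hij : i = j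
          · subst hij
            simp only [Equiv.Perm.mul_apply, Equiv.swap_apply_right]
            constructor
            · exact le_trans ((hsol 0).1.trans_eq (by rw [hv0])) (hd0 j)
            · have h2 := (hsol 0).2
              rw [hv0] at h2
              exact le_trans h2 (Nat.add_le_add (hd0 j) (le_refl _))
          · have hs : Equiv.swap (0 : Fin (m + 1)) j i = i :=
              Equiv.swap_apply_of_ne_of_ne hi0 hij
            simp only [Equiv.Perm.mul_apply, hs]
            exact hsol i
  obtain ⟨π₁, τ₁, hτ₁, hsol₁⟩ := step1
  -- Step 2: arrange π 0 = 0
  set i0 := π₁.symm 0 with hi0def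
  have hπi0 : π₁ i0 = 0 := π₁.apply_symm_apply 0
  refine ⟨π₁ * Equiv.swap 0 i0, τ₁, ?_, hτ₁, ?_⟩
  · simp [Equiv.Perm.mul_apply, Equiv.swap_apply_left, hπi0]
  · intro i
    by_cases hi0 : i = 0
    · subst hi0
      simp only [Equiv.Perm.mul_apply, Equiv.swap_apply_left, hπi0, hτ₁, hv0]
      exact ⟨ha0d, hsmall⟩
    · by_cases hii : i = i0
      · subst hii
        simp only [Equiv.Perm.mul_apply, Equiv.swap_apply_right]
        constructor
        · exact le_trans ((hsol₁ 0).1.trans_eq (by rw [hv0])) (hd0 i0)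
        · have h2 := (hsol₁ i0).2
          rw [hπi0, hv0] at h2
          exact le_trans h2 (Nat.add_le_add_left (ha0 (π₁ 0)) _)
      · have hs : Equiv.swap (0 : Fin (m + 1)) i0 i = i :=
          Equiv.swap_apply_of_ne_of_ne hi0 hii
        simp only [Equiv.Perm.mul_apply, hs]
        exact hsol₁ i


theorem stmt_12 (n : ℕ) (hn : 0 < n) (d t : ℕ → ℕ)
    (hdpos : ∀ i < n, 0 < d i)
    (hmono : ∀ i j, i ≤ j → j < n → d i ≤ d j)
    (hapos : ∀ i < n, 0 < disc d n i)
    (htpos : ∀ i < n, 0 < t i)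
    (htinj : ∀ i < n, ∀ j < n, t i = t j → i = j)
    (k : ℕ) (hk : k < n) (hsmall : t k ≤ d 0 + disc d n 0) :
    PMSolution n d (disc d n) t ↔
      PMSolution (n - 1) (fun i => d (i + 1)) (fun i => disc d n (i + 1))
        (fun i => if i < k then t i else t (i + 1)) := by
  obtain ⟨m, rfl⟩ : ∃ m, n = m + 1 := ⟨n - 1, by omega⟩
  set a := disc d (m + 1) with ha
  have ha0d : a 0 ≤ d 0 := disc_zero_le_d d (m + 1) (by omega)
  have hd0 : ∀ i : Fin (m + 1), d 0 ≤ d (i : ℕ) :=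
    fun i => hmono 0 i (Nat.zero_le _) i.isLt
  have ha0 : ∀ i : Fin (m + 1), a 0 ≤ a (i : ℕ) :=
    fun i => disc_zero_le d (m + 1) i i.isLt
  set k' : Fin (m + 1) := ⟨k, hk⟩ with hk'
  have hvk : (k' : ℕ) = k := rfl
  constructor
  · rintro ⟨π, τ, hsol⟩
    obtain ⟨π', τ', hπ0, hτ0, hsol'⟩ :=
      exchange_s12 m d a t k' ha0d hd0 ha0 (by rw [hvk]; exact hsmall) π τ hsol
    refine ⟨resPerm m 0 π', resPerm m k' τ', fun i => ?_⟩
    have hπs := resPerm_spec m 0 π' hπ0 i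
    have hτs := resPerm_spec m k' τ' hτ0 i
    have h := hsol' i.succ
    rw [hπs, hτs] at h
    simp only [Fin.succAbove_zero, Fin.val_succ, coe_succAbove, hvk] at h
    rw [apply_ite t] at h
    dsimp only
    exact h
  · rintro ⟨π₁, τ₁, hsol₁⟩
    refine ⟨extPerm m 0 π₁, extPerm m k' τ₁, fun i => ?_⟩
    refine Fin.cases ?_ ?_ i
    · rw [extPerm_zero, extPerm_zero]
      simp only [Fin.val_zero]
      exact ⟨ha0d, hsmall⟩
    · intro j
      have h := hsol₁ j
      dsimp only at h
      rw [extPerm_succ, extPerm_succ]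
      simp only [Fin.succAbove_zero, Fin.val_succ, coe_succAbove, hvk]
      rw [apply_ite t]
      exact h
end
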